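/- Fix functions lgcd : (ℕ → Option M) → M and red : (ℕ → Option M) → (ℕ → Option M) such that red Λ is nontrivial for every nontrivial Λ. Then conditions (a) and (b) hold if and only if all of the following hold for all nontrivial Γ, Λ : ℕ → Option M and all υ : M: (i) if lgcd Γ = lgcd Λ and red Γ = red Λ then Γ = Λ; (ii) lgcd (red Λ) = 1 and red (red Λ) = red Λ; (iii) lgcd (υ • Λ) = υ * lgcd Λ and red (υ • Λ) = red Λ. -/

import Mathlib

/-- `Λ : ℕ → Option M` is nontrivial if it is defined somewhere. -/
def NontrivialFn {M : Type} (Λ : ℕ → Option M) : Prop :=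
  Λ ≠ fun _ => none

/-- `υ • Λ`, multiplying each defined value of `Λ` by `υ` on the left. -/
def smulFn {M : Type} [Monoid M] (υ : M) (Λ : ℕ → Option M) : ℕ → Option M :=
  fun n => (Λ n).map (υ * ·)

/-- The functions `lgcd` and `red` satisfy conditions (a) and (b). -/
def SatisfiesLgcdRed (M : Type) [Monoid M] (lgcd : (ℕ → Option M) → M)
    (red : (ℕ → Option M) → (ℕ → Option M)) : Prop :=
  (∀ Λ, NontrivialFn Λ → NontrivialFn (red Λ)) ∧
  (∀ Λ, NontrivialFn Λ → Λ = smulFn (lgcd Λ) (red Λ)) ∧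
  (∀ Γ Λ, NontrivialFn Γ → NontrivialFn Λ → ∀ υ ν : M,
    smulFn υ (red Γ) = smulFn ν (red Λ) → υ = ν ∧ red Γ = red Λ)

/-! For nontrivial `Γ`, both sides say that `(lgcd, red)` recovers `υ` and `red Γ` from
`υ • red Γ`. Given (a), condition (b) is exactly this, read through `Λ = lgcd Λ • red Λ` at
`Λ = υ • red Γ`; conversely, (ii) and (iii) compute `lgcd` and `red` of `υ • red Γ` directly.
Besides this, (i) follows from (a), and (a) from (i) because `lgcd Λ • red Λ` and `Λ` share
`lgcd` and `red`. -/

lemma smulFn_one {M : Type} [Monoid M] (Λ : ℕ → Option M) : smulFn 1 Λ = Λ := by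
  funext n
  simp [smulFn]

lemma smulFn_smulFn {M : Type} [Monoid M] (υ ν : M) (Λ : ℕ → Option M) :
    smulFn υ (smulFn ν Λ) = smulFn (υ * ν) Λ := by
  funext n
  simp [smulFn, Option.map_map, mul_assoc]

lemma NontrivialFn.smulFn {M : Type} [Monoid M] {Λ : ℕ → Option M} (h : NontrivialFn Λ)
    (υ : M) : NontrivialFn (smulFn υ Λ) := by
  intro hυΛ
  apply h
  funext n
  simpa [_root_.smulFn, Option.map_eq_none_iff] using congrFun hυΛ n

section

variable {M : Type} [Monoid M] {lgcd : (ℕ → Option M) → M}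
  {red : (ℕ → Option M) → (ℕ → Option M)}

def RecoversSmulRed (lgcd : (ℕ → Option M) → M) (red : (ℕ → Option M) → (ℕ → Option M)) :
    Prop :=
  ∀ Γ, NontrivialFn Γ → ∀ υ : M,
    lgcd (smulFn υ (red Γ)) = υ ∧ red (smulFn υ (red Γ)) = red Γ

lemma recoversSmulRed_of_decomposition (hred : ∀ Λ, NontrivialFn Λ → NontrivialFn (red Λ))
    (ha : ∀ Λ, NontrivialFn Λ → Λ = smulFn (lgcd Λ) (red Λ))
    (hb : ∀ Γ Λ, NontrivialFn Γ → NontrivialFn Λ → ∀ υ ν : M,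
      smulFn υ (red Γ) = smulFn ν (red Λ) → υ = ν ∧ red Γ = red Λ) :
    RecoversSmulRed lgcd red := by
  intro Γ hΓ υ
  have hυΓ := (hred Γ hΓ).smulFn υ
  exact hb _ Γ hυΓ hΓ _ _ (ha _ hυΓ).symm

lemma recoversSmulRed_of_lgcd_smulFn (hred : ∀ Λ, NontrivialFn Λ → NontrivialFn (red Λ))
    (hii : ∀ Λ, NontrivialFn Λ → lgcd (red Λ) = 1 ∧ red (red Λ) = red Λ)
    (hiii : ∀ Λ, NontrivialFn Λ → ∀ υ : M,
      lgcd (smulFn υ Λ) = υ * lgcd Λ ∧ red (smulFn υ Λ) = red Λ) :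
    RecoversSmulRed lgcd red := by
  intro Γ hΓ υ
  obtain ⟨hlgcd, hred_red⟩ := hii Γ hΓ
  obtain ⟨hlgcd_smul, hred_smul⟩ := hiii (red Γ) (hred Γ hΓ) υ
  exact ⟨by rw [hlgcd_smul, hlgcd, mul_one], by rw [hred_smul, hred_red]⟩

namespace RecoversSmulRed

lemma lgcd_red_and_red_red (h : RecoversSmulRed lgcd red) {Λ : ℕ → Option M}
    (hΛ : NontrivialFn Λ) :
    lgcd (red Λ) = 1 ∧ red (red Λ) = red Λ := by
  simpa only [smulFn_one] using h Λ hΛ 1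

lemma lgcd_smulFn_and_red_smulFn (h : RecoversSmulRed lgcd red)
    (ha : ∀ Λ, NontrivialFn Λ → Λ = smulFn (lgcd Λ) (red Λ))
    {Λ : ℕ → Option M} (hΛ : NontrivialFn Λ) (υ : M) :
    lgcd (smulFn υ Λ) = υ * lgcd Λ ∧ red (smulFn υ Λ) = red Λ := by
  have hυΛ : smulFn υ Λ = smulFn (υ * lgcd Λ) (red Λ) := by
    rw [← smulFn_smulFn, ← ha Λ hΛ]
  rw [hυΛ]
  exact h Λ hΛ _

lemma eq_smulFn_lgcd_red (h : RecoversSmulRed lgcd red)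
    (hred : ∀ Λ, NontrivialFn Λ → NontrivialFn (red Λ))
    (hi : ∀ Γ Λ, NontrivialFn Γ → NontrivialFn Λ → lgcd Γ = lgcd Λ → red Γ = red Λ → Γ = Λ)
    {Λ : ℕ → Option M} (hΛ : NontrivialFn Λ) : Λ = smulFn (lgcd Λ) (red Λ) := by
  obtain ⟨hlgcd, hred_eq⟩ := h Λ hΛ (lgcd Λ)
  exact (hi _ Λ ((hred Λ hΛ).smulFn _) hΛ hlgcd hred_eq).symm

lemma eq_and_eq_of_smulFn_red_eq (h : RecoversSmulRed lgcd red) {Γ Λ : ℕ → Option M}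
    (hΓ : NontrivialFn Γ) (hΛ : NontrivialFn Λ) {υ ν : M}
    (hυν : smulFn υ (red Γ) = smulFn ν (red Λ)) :
    υ = ν ∧ red Γ = red Λ := by
  obtain ⟨hlgcdΓ, hredΓ⟩ := h Γ hΓ υ
  obtain ⟨hlgcdΛ, hredΛ⟩ := h Λ hΛ ν
  exact ⟨hlgcdΓ.symm.trans (hυν ▸ hlgcdΛ), hredΓ.symm.trans (hυν ▸ hredΛ)⟩

end RecoversSmulRed

end

theorem lgcd_red_conditions_iff (M : Type) [Monoid M]
    (lgcd : (ℕ → Option M) → M) (red : (ℕ → Option M) → (ℕ → Option M))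
    (hred : ∀ Λ, NontrivialFn Λ → NontrivialFn (red Λ)) :
    ((∀ Λ, NontrivialFn Λ → Λ = smulFn (lgcd Λ) (red Λ)) ∧
     (∀ Γ Λ, NontrivialFn Γ → NontrivialFn Λ → ∀ υ ν : M,
       smulFn υ (red Γ) = smulFn ν (red Λ) → υ = ν ∧ red Γ = red Λ)) ↔
    ((∀ Γ Λ, NontrivialFn Γ → NontrivialFn Λ →
       lgcd Γ = lgcd Λ → red Γ = red Λ → Γ = Λ) ∧
     (∀ Λ, NontrivialFn Λ → lgcd (red Λ) = 1 ∧ red (red Λ) = red Λ) ∧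
     (∀ Λ, NontrivialFn Λ → ∀ υ : M,
       lgcd (smulFn υ Λ) = υ * lgcd Λ ∧ red (smulFn υ Λ) = red Λ)) := by
  constructor
  · rintro ⟨ha, hb⟩
    have h := recoversSmulRed_of_decomposition hred ha hb
    refine ⟨fun Γ Λ hΓ hΛ hlgcd hred_eq => ?_, fun Λ hΛ => h.lgcd_red_and_red_red hΛ,
      fun Λ hΛ => h.lgcd_smulFn_and_red_smulFn ha hΛ⟩
    rw [ha Γ hΓ, ha Λ hΛ, hlgcd, hred_eq]
  · rintro ⟨hi, hii, hiii⟩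
    have h := recoversSmulRed_of_lgcd_smulFn hred hii hiii
    exact ⟨fun Λ hΛ => h.eq_smulFn_lgcd_red hred hi hΛ,
      fun Γ Λ hΓ hΛ υ ν => h.eq_and_eq_of_smulFn_red_eq hΓ hΛ⟩
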